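/- arXiv:1006.0415 — 2 statements merged into one kernel-verified Lean document; each statement's English description precedes it below -/
import Mathlib

section
/- Let R ≥ 2, let L, L' ⊂ {0,...,R−1} with L ⊕ L' = {0,...,R−1}, and set Γ(L) = {Σ_{k=0}^n R^k l_k : l_k ∈ L, n ∈ ℕ₀} and similarly Γ(L'). Then Γ(L) ⊕ Γ(L') = ℕ₀, i.e., every nonnegative integer has a unique representation as γ + γ' with γ ∈ Γ(L), γ' ∈ Γ(L'). -/
/-- `L ⊕ L' = {0,…,R−1}`: the sum map `L × L' → {0,…,R−1}` is a bijection. -/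
def ComplPair (L L' : Finset ℕ) (R : ℕ) : Prop :=
  (∀ l ∈ L, ∀ l' ∈ L', l + l' < R) ∧
    ∀ k < R, ∃! p : ℕ × ℕ, p.1 ∈ L ∧ p.2 ∈ L' ∧ p.1 + p.2 = k

/-- `Γ(L)`: nonnegative integers whose base-`R` digits all lie in `L`. -/
def GammaSet (R : ℕ) (L : Finset ℕ) : Set ℕ :=
  {n : ℕ | ∃ (m : ℕ) (f : ℕ → ℕ), (∀ i, f i ∈ L) ∧
    n = ∑ k ∈ Finset.range (m + 1), R ^ k * f k}

lemma gamma_zero (R : ℕ) {L : Finset ℕ} (h0 : 0 ∈ L) : 0 ∈ GammaSet R L :=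
  ⟨0, fun _ => 0, fun _ => h0, by simp⟩

lemma gamma_build {R : ℕ} {L : Finset ℕ} {a q : ℕ} (ha : a ∈ L)
    (hq : q ∈ GammaSet R L) : a + R * q ∈ GammaSet R L := by
  obtain ⟨m, f, hf, rfl⟩ := hq
  refine ⟨m + 1, fun k => if k = 0 then a else f (k - 1), fun i => ?_, ?_⟩
  · by_cases hi : i = 0 <;> simp [hi, ha, hf]
  · conv_rhs => rw [Finset.sum_range_succ']
    simp only [Nat.succ_ne_zero, if_neg, Nat.add_sub_cancel, if_pos rfl, pow_zero, one_mul]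
    rw [Finset.mul_sum, add_comm]
    congr 1
    refine Finset.sum_congr rfl fun k _ => ?_
    simp [pow_succ]
    ring

lemma gamma_split {R : ℕ} {L : Finset ℕ} (hR : 2 ≤ R) (hL : ∀ l ∈ L, l < R)
    (h0 : 0 ∈ L) {n : ℕ} (hn : n ∈ GammaSet R L) :
    n % R ∈ L ∧ n / R ∈ GammaSet R L := by
  obtain ⟨m, f, hf, rfl⟩ := hn
  have key : ∑ k ∈ Finset.range (m + 1), R ^ k * f k
      = f 0 + R * ∑ k ∈ Finset.range m, R ^ k * f (k + 1) := by
    rw [Finset.sum_range_succ', Finset.mul_sum, add_comm]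
    simp only [pow_zero, one_mul]
    congr 1
    refine Finset.sum_congr rfl fun k _ => ?_
    rw [pow_succ]
    ring
  rw [key]
  have hf0 : f 0 < R := hL _ (hf 0)
  have hmod : (f 0 + R * ∑ k ∈ Finset.range m, R ^ k * f (k + 1)) % R = f 0 := by
    rw [Nat.add_mul_mod_self_left, Nat.mod_eq_of_lt hf0]
  have hdiv : (f 0 + R * ∑ k ∈ Finset.range m, R ^ k * f (k + 1)) / R
      = ∑ k ∈ Finset.range m, R ^ k * f (k + 1) := by
    rw [Nat.add_mul_div_left _ _ (by omega : 0 < R), Nat.div_eq_of_lt hf0, zero_add]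
  rw [hmod, hdiv]
  refine ⟨hf 0, ?_⟩
  rcases m with _ | m₀
  · simpa using gamma_zero R h0
  · exact ⟨m₀, fun k => f (k + 1), fun i => hf _, rfl⟩

/-- If `L ⊕ L' = {0,…,R−1}` then `Γ(L) ⊕ Γ(L') = ℕ₀`: every natural number has a
unique representation `γ + γ'` with `γ ∈ Γ(L)`, `γ' ∈ Γ(L')`. -/
theorem stmt8 (R : ℕ) (hR : 2 ≤ R) (L L' : Finset ℕ)
    (hL : ∀ l ∈ L, l < R) (hL' : ∀ l ∈ L', l < R) (h : ComplPair L L' R) :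
    ∀ n : ℕ, ∃! p : ℕ × ℕ, p.1 ∈ GammaSet R L ∧ p.2 ∈ GammaSet R L' ∧ n = p.1 + p.2 := by
  -- 0 belongs to both L and L'
  have h0 : 0 ∈ L ∧ 0 ∈ L' := by
    obtain ⟨⟨a, b⟩, ⟨ha, hb, hab⟩, -⟩ := h.2 0 (by omega)
    obtain ⟨rfl, rfl⟩ : a = 0 ∧ b = 0 := by omega
    exact ⟨ha, hb⟩
  intro n
  induction n using Nat.strong_induction_on with
  | _ n ih =>
    rcases Nat.eq_zero_or_pos n with rfl | hn
    · refine ⟨(0, 0), ⟨gamma_zero R h0.1, gamma_zero R h0.2, rfl⟩, ?_⟩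
      rintro ⟨x, y⟩ ⟨-, -, hxy⟩
      simp only [Prod.mk.injEq]
      omega
    · obtain ⟨⟨a, b⟩, ⟨ha, hb, hab⟩, huniq⟩ := h.2 (n % R) (Nat.mod_lt _ (by omega))
      have hq : n / R < n := Nat.div_lt_self hn (by omega)
      obtain ⟨⟨c, d⟩, ⟨hc, hd, hcd⟩, huq⟩ := ih (n / R) hq
      refine ⟨(a + R * c, b + R * d), ⟨gamma_build ha hc, gamma_build hb hd, ?_⟩, ?_⟩
      · have := Nat.mod_add_div n R
        have : n % R + R * (n / R) = (a + R * c) + (b + R * d) := by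
          rw [← hab, hcd, mul_add]; ring
        omega
      · rintro ⟨x, y⟩ ⟨hx, hy, hxy⟩
        obtain ⟨hxm, hxd⟩ := gamma_split hR hL h0.1 hx
        obtain ⟨hym, hyd⟩ := gamma_split hR hL' h0.2 hy
        have hxs := Nat.mod_add_div x R
        have hys := Nat.mod_add_div y R
        have hsum : n = (x % R + y % R) + R * (x / R + y / R) := by
          rw [mul_add]; omega
        have hlt : x % R + y % R < R := h.1 _ hxm _ hym
        have hmod : n % R = x % R + y % R := by
          rw [hsum, Nat.add_mul_mod_self_left, Nat.mod_eq_of_lt hlt]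
        have hdiv : n / R = x / R + y / R := by
          rw [hsum, Nat.add_mul_div_left _ _ (by omega : 0 < R),
            Nat.div_eq_of_lt hlt, zero_add]
        have h1 := huniq (x % R, y % R) ⟨hxm, hym, hmod.symm⟩
        have h2 := huq (x / R, y / R) ⟨hxd, hyd, hdiv⟩
        simp only [Prod.mk.injEq] at h1 h2 ⊢
        constructor
        · rw [← hxs, h1.1, h2.1]
        · rw [← hys, h1.2, h2.2]
end

section
/- Let R ≥ 2, L ⊕ L' = {0,...,R−1} with L, L' ⊂ {0,...,R−1}, and let G_Γ(z,x) = Σ_{γ∈Γ} z^γ e^{−2πiγx} for a set Γ ⊂ ℕ₀. Then G_{Γ(L)}(z,x) · G_{Γ(L')}(z,x) = 1/(1 − z e^{−2πix}) for all |z| < 1 and x ∈ ℝ. -/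
open Complex Real

/-! If `A × B → ℕ, (a, b) ↦ a + b` is a bijection, the product of the generating series of
`A` and `B` is the geometric series. With `L ⊕ L' = {0, …, R-1}` this holds for `A = Γ(L)`,
`B = Γ(L')`: adding two numbers whose last digits come from `L` and `L'` produces no carry, so the
decomposition `n = a + b` is found digit by digit, by induction on `n` through `n / R`. -/

theorem tsum_pow_mul_tsum_pow_of_bijective_add {K : Type*} [NormedDivisionRing K]
    [CompleteSpace K]
    {A B : Set ℕ} (hAB : Function.Bijective fun p : A × B => (p.1 : ℕ) + p.2)
    {w : K} (hw : ‖w‖ < 1) :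
    (∑' a : A, w ^ (a : ℕ)) * (∑' b : B, w ^ (b : ℕ)) = (1 - w)⁻¹ := by
  have hsum : Summable fun n : ℕ => ‖w ^ n‖ := by
    simpa using summable_geometric_of_lt_one (norm_nonneg w) hw
  have hA : Summable fun a : A => ‖w ^ (a : ℕ)‖ := hsum.subtype A
  have hB : Summable fun b : B => ‖w ^ (b : ℕ)‖ := hsum.subtype B
  rw [tsum_mul_tsum_of_summable_norm hA hB]
  simp_rw [← pow_add]
  exact ((Equiv.ofBijective _ hAB).tsum_eq (w ^ ·)).trans (tsum_geometric_of_norm_lt_one hw)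

section GammaSet

variable {R : ℕ} {L : Finset ℕ}

lemma sum_range_succ_pow_mul (f : ℕ → ℕ) (m : ℕ) :
    ∑ k ∈ Finset.range (m + 1), R ^ k * f k =
      R * ∑ k ∈ Finset.range m, R ^ k * f (k + 1) + f 0 := by
  rw [Finset.sum_range_succ', Finset.mul_sum, pow_zero, one_mul]
  exact congrArg (· + f 0) (Finset.sum_congr rfl fun _ _ => by ring)

lemma zero_mem_gammaSet (h0 : 0 ∈ L) : 0 ∈ GammaSet R L :=
  ⟨0, fun _ => 0, fun _ => h0, by simp⟩

lemma mul_add_mem_gammaSet {a l : ℕ} (ha : a ∈ GammaSet R L) (hl : l ∈ L) :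
    R * a + l ∈ GammaSet R L := by
  obtain ⟨m, f, hf, rfl⟩ := ha
  refine ⟨m + 1, Nat.rec l fun i _ => f i, fun i => by cases i <;> simp [hl, hf], ?_⟩
  rw [sum_range_succ_pow_mul _ (m + 1)]
  rfl

lemma mem_gammaSet_iff (h0 : 0 ∈ L) (hL : ∀ l ∈ L, l < R) {n : ℕ} :
    n ∈ GammaSet R L ↔ n % R ∈ L ∧ n / R ∈ GammaSet R L := by
  refine ⟨?_, fun ⟨hmod, hdiv⟩ => Nat.div_add_mod n R ▸ mul_add_mem_gammaSet hdiv hmod⟩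
  rintro ⟨m, f, hf, rfl⟩
  have hf0 : f 0 < R := hL _ (hf 0)
  rw [sum_range_succ_pow_mul, Nat.mul_add_mod, Nat.mod_eq_of_lt hf0, Nat.mul_add_div (by omega),
    Nat.div_eq_of_lt hf0, add_zero]
  refine ⟨hf 0, ?_⟩
  cases m with
  | zero => simpa using zero_mem_gammaSet h0
  | succ m => exact ⟨m, fun i => f (i + 1), fun i => hf _, rfl⟩

end GammaSet

namespace ComplPair

variable {L L' : Finset ℕ} {R : ℕ}

lemma symm (h : ComplPair L L' R) : ComplPair L' L R := by
  refine ⟨fun l' hl' l hl => add_comm l l' ▸ h.1 l hl l' hl', fun k hk => ?_⟩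
  obtain ⟨⟨a, b⟩, hab, huniq⟩ := h.2 k hk
  refine ⟨(b, a), ⟨hab.2.1, hab.1, by omega⟩, fun ⟨c, d⟩ hcd => ?_⟩
  have := huniq (d, c) ⟨hcd.2.1, hcd.1, by omega⟩
  simp_all

lemma zero_mem (h : ComplPair L L' R) (hR : 0 < R) : 0 ∈ L := by
  obtain ⟨⟨a, b⟩, ⟨ha, -, hab⟩, -⟩ := h.2 0 hR
  obtain rfl : a = 0 := by omega
  exact ha

lemma lt_of_mem (h : ComplPair L L' R) (hR : 0 < R) {l : ℕ} (hl : l ∈ L) : l < R := by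
  simpa using h.1 l hl 0 (h.symm.zero_mem hR)

lemma mem_gammaSet_iff (h : ComplPair L L' R) (hR : 0 < R) {n : ℕ} :
    n ∈ GammaSet R L ↔ n % R ∈ L ∧ n / R ∈ GammaSet R L :=
  _root_.mem_gammaSet_iff (h.zero_mem hR) fun _ => h.lt_of_mem hR

lemma exists_add_eq (h : ComplPair L L' R) (hR : 2 ≤ R) (n : ℕ) :
    ∃ a ∈ GammaSet R L, ∃ b ∈ GammaSet R L', a + b = n := by
  induction n using Nat.strong_induction_on with
  | _ n ih =>
    rcases Nat.eq_zero_or_pos n with rfl | hn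
    · exact ⟨0, zero_mem_gammaSet (h.zero_mem (by omega)),
        0, zero_mem_gammaSet (h.symm.zero_mem (by omega)), rfl⟩
    obtain ⟨a, ha, b, hb, hab⟩ := ih (n / R) (Nat.div_lt_self hn (by omega))
    obtain ⟨⟨l, l'⟩, ⟨hl, hl', hll' : l + l' = n % R⟩, -⟩ :=
      h.2 (n % R) (Nat.mod_lt _ (by omega))
    refine ⟨R * a + l, mul_add_mem_gammaSet ha hl, R * b + l', mul_add_mem_gammaSet hb hl', ?_⟩
    rw [← Nat.div_add_mod n R, ← hab, ← hll']
    ring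

lemma eq_of_add_eq (h : ComplPair L L' R) (hR : 2 ≤ R) {a b c d : ℕ}
    (ha : a ∈ GammaSet R L) (hb : b ∈ GammaSet R L') (hc : c ∈ GammaSet R L)
    (hd : d ∈ GammaSet R L') (habcd : a + b = c + d) : a = c ∧ b = d := by
  induction hn : a + b using Nat.strong_induction_on generalizing a b c d with
  | _ n ih =>
    rcases Nat.eq_zero_or_pos n with rfl | hn0
    · omega
    rw [h.mem_gammaSet_iff (by omega)] at ha hc
    rw [h.symm.mem_gammaSet_iff (by omega)] at hb hd
    have hab := h.1 _ ha.1 _ hb.1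
    have hcd := h.1 _ hc.1 _ hd.1
    -- no carry: the last digit and the quotient of the sum split as those of the summands
    have hmod : a % R + b % R = c % R + d % R := by
      rw [← Nat.add_mod_of_add_mod_lt hab, habcd, Nat.add_mod_of_add_mod_lt hcd]
    have hdiv : a / R + b / R = c / R + d / R := by
      rw [← Nat.add_div_eq_of_add_mod_lt hab, habcd, Nat.add_div_eq_of_add_mod_lt hcd]
    have hlt : a / R + b / R < n := by
      rw [← Nat.add_div_eq_of_add_mod_lt hab, hn]
      exact Nat.div_lt_self hn0 (by omega)
    obtain ⟨hac_mod, hbd_mod⟩ : a % R = c % R ∧ b % R = d % R := Prod.ext_iff.mp <|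
      (h.2 _ hab).unique (y₁ := (a % R, b % R)) (y₂ := (c % R, d % R))
        ⟨ha.1, hb.1, rfl⟩ ⟨hc.1, hd.1, hmod.symm⟩
    obtain ⟨hac_div, hbd_div⟩ := ih _ hlt ha.2 hb.2 hc.2 hd.2 hdiv rfl
    constructor
    · rw [← Nat.div_add_mod a R, ← Nat.div_add_mod c R, hac_div, hac_mod]
    · rw [← Nat.div_add_mod b R, ← Nat.div_add_mod d R, hbd_div, hbd_mod]

lemma bijective_add (h : ComplPair L L' R) (hR : 2 ≤ R) :
    Function.Bijective fun p : GammaSet R L × GammaSet R L' => (p.1 : ℕ) + p.2 := by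
  refine ⟨fun ⟨⟨a, ha⟩, ⟨b, hb⟩⟩ ⟨⟨c, hc⟩, ⟨d, hd⟩⟩ habcd => ?_, fun n => ?_⟩
  · obtain ⟨rfl, rfl⟩ := h.eq_of_add_eq hR ha hb hc hd habcd
    rfl
  · obtain ⟨a, ha, b, hb, rfl⟩ := h.exists_add_eq hR n
    exact ⟨(⟨a, ha⟩, ⟨b, hb⟩), rfl⟩

end ComplPair

theorem stmt9_general (R : ℕ) (hR : 2 ≤ R) (L L' : Finset ℕ)
    (h : ComplPair L L' R)
    (G : Set ℕ → ℂ → ℝ → ℂ)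
    (hG : ∀ (Γ : Set ℕ) (z : ℂ) (x : ℝ), G Γ z x =
      ∑' γ : Γ, z ^ (γ : ℕ) * Complex.exp (-(2 * Real.pi * Complex.I * (γ : ℕ) * x)))
    (z : ℂ) (hz : ‖z‖ < 1) (x : ℝ) :
    G (GammaSet R L) z x * G (GammaSet R L') z x =
      (1 - z * Complex.exp (-(2 * Real.pi * Complex.I * x)))⁻¹ := by
  set w := z * Complex.exp (-(2 * Real.pi * Complex.I * x))
  have hw : ‖w‖ < 1 := by simpa [w, Complex.norm_exp] using hz
  have hG_pow (Γ : Set ℕ) : G Γ z x = ∑' γ : Γ, w ^ (γ : ℕ) := by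
    refine (hG Γ z x).trans (tsum_congr fun γ => ?_)
    rw [mul_pow, ← Complex.exp_nat_mul]
    ring_nf
  rw [hG_pow, hG_pow, tsum_pow_mul_tsum_pow_of_bijective_add (h.bijective_add hR) hw]

/-- With `G_Γ(z,x) = ∑_{γ∈Γ} z^γ e^{−2πiγx}`, if `L ⊕ L' = {0,…,R−1}` then
`G_{Γ(L)}(z,x) · G_{Γ(L')}(z,x) = 1/(1 − z e^{−2πix})` for `|z| < 1`, `x ∈ ℝ`. -/
theorem stmt9 (R : ℕ) (hR : 2 ≤ R) (L L' : Finset ℕ)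
    (hL : ∀ l ∈ L, l < R) (hL' : ∀ l ∈ L', l < R) (h : ComplPair L L' R)
    (G : Set ℕ → ℂ → ℝ → ℂ)
    (hG : ∀ (Γ : Set ℕ) (z : ℂ) (x : ℝ), G Γ z x =
      ∑' γ : Γ, z ^ (γ : ℕ) * Complex.exp (-(2 * Real.pi * Complex.I * (γ : ℕ) * x)))
    (z : ℂ) (hz : ‖z‖ < 1) (x : ℝ) :
    G (GammaSet R L) z x * G (GammaSet R L') z x =
      (1 - z * Complex.exp (-(2 * Real.pi * Complex.I * x)))⁻¹ :=
  stmt9_general R hR L L' h G hG z hz x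
end
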